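/- Let $K$ be a real symmetric $p\times p$ matrix and $\mu>0$. Then the matrix $\Theta := \dfrac{K+\sqrt{K^2+4\mu I}}{2\mu}$ is symmetric positive definite and satisfies the matrix quadratic equation $-\Theta^{-1}+\mu\Theta = K$. -/

import Mathlib

/-!
Let `θ(x) = (x + √(x² + 4μ)) / (2μ)` be the positive root of `μθ² - xθ - 1 = 0`, so that
`θ > 0` and `-θ⁻¹ + μθ = x` for every real `x`. By the continuous functional calculus,
`√(K² + 4μ I)` is `x ↦ √(x² + 4μ)` applied to `K`, hence `Θ = θ(K)`; the two scalar
facts then transfer to `Θ`, as strict positivity and as the identity `-Θ⁻¹ + μΘ = K`.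
-/

open scoped ComplexOrder in
noncomputable def Matrix.PosSemidef.sqrt {n : Type*} [Fintype n] [DecidableEq n] {𝕜 : Type*}
    [RCLike 𝕜] {A : Matrix n n 𝕜} (hA : A.PosSemidef) : Matrix n n 𝕜 :=
  hA.1.eigenvectorUnitary.1 * Matrix.diagonal ((↑) ∘ (√·) ∘ hA.1.eigenvalues) *
  (star hA.1.eigenvectorUnitary : Matrix n n 𝕜)

open scoped ComplexOrder MatrixOrder in
lemma Matrix.PosSemidef.sqrt_eq_cfc_sqrt {n : Type*} [Fintype n] [DecidableEq n] {𝕜 : Type*}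
    [RCLike 𝕜] {A : Matrix n n 𝕜} (hA : A.PosSemidef) : hA.sqrt = CFC.sqrt A := by
  rw [CFC.sqrt_eq_real_sqrt A hA.nonneg, cfcₙ_eq_cfc, hA.1.cfc_eq]
  rfl

noncomputable def positiveRoot (μ x : ℝ) : ℝ := (x + √(x ^ 2 + 4 * μ)) / (2 * μ)

section positiveRoot

variable {μ : ℝ}

lemma abs_lt_sqrt_sq_add (hμ : 0 < μ) (x : ℝ) : |x| < √(x ^ 2 + 4 * μ) := by
  rw [← Real.sqrt_sq_eq_abs]
  exact Real.sqrt_lt_sqrt (sq_nonneg x) (by linarith)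

lemma positiveRoot_pos (hμ : 0 < μ) (x : ℝ) : 0 < positiveRoot μ x := by
  have := neg_abs_le x
  have := abs_lt_sqrt_sq_add hμ x
  unfold positiveRoot
  apply div_pos <;> linarith

lemma neg_inv_positiveRoot_add_mul (hμ : 0 < μ) (x : ℝ) :
    -(positiveRoot μ x)⁻¹ + μ * positiveRoot μ x = x := by
  have hs : √(x ^ 2 + 4 * μ) ^ 2 = x ^ 2 + 4 * μ := Real.sq_sqrt (by positivity)
  have := (positiveRoot_pos hμ x).ne'
  field_simp
  unfold positiveRoot
  field_simp
  nlinarith [hs]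

lemma continuous_positiveRoot (μ : ℝ) : Continuous (positiveRoot μ) := by
  unfold positiveRoot
  fun_prop

end positiveRoot

section CFC

open scoped Ring

variable {A : Type*} [Ring A] [StarRing A] [TopologicalSpace A] [Algebra ℝ A]
  [ContinuousFunctionalCalculus ℝ A IsSelfAdjoint] {μ : ℝ} {a : A}

lemma neg_ringInverse_cfc_positiveRoot_add_smul (hμ : 0 < μ) (ha : IsSelfAdjoint a) :
    -(cfc (positiveRoot μ) a)⁻¹ʳ + μ • cfc (positiveRoot μ) a = a := by
  have hθ := continuous_positiveRoot μ
  have hθinv : Continuous fun x => -(positiveRoot μ x)⁻¹ :=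
    (hθ.inv₀ fun x => (positiveRoot_pos hμ x).ne').neg
  calc -(cfc (positiveRoot μ) a)⁻¹ʳ + μ • cfc (positiveRoot μ) a
      = cfc (fun x => -(positiveRoot μ x)⁻¹ + μ • positiveRoot μ x) a := by
        symm
        rw [cfc_add (g := fun x => μ • positiveRoot μ x) (hf := hθinv.continuousOn),
          cfc_neg .., cfc_inv _ _ fun x _ => (positiveRoot_pos hμ x).ne', cfc_smul ..]
    _ = cfc (fun x => x) a := cfc_congr fun x _ => neg_inv_positiveRoot_add_mul hμ x
    _ = a := cfc_id' ..

variable [PartialOrder A] [StarOrderedRing A] [NonnegSpectrumClass ℝ A]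

lemma isStrictlyPositive_cfc_positiveRoot (hμ : 0 < μ) (ha : IsSelfAdjoint a) :
    IsStrictlyPositive (cfc (positiveRoot μ) a) :=
  (cfc_isStrictlyPositive_iff _ a (continuous_positiveRoot μ).continuousOn).mpr
    fun x _ => positiveRoot_pos hμ x

variable [IsSemitopologicalRing A] [T2Space A]

lemma CFC.sqrt_sq_add_smul_one (ha : IsSelfAdjoint a) {c : ℝ} (hc : 0 ≤ c) :
    CFC.sqrt (a ^ 2 + c • 1) = cfc (fun x => √(x ^ 2 + c)) a := by
  refine CFC.sqrt_unique ?_ (cfc_nonneg fun x _ => Real.sqrt_nonneg _)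
  calc cfc (fun x => √(x ^ 2 + c)) a * cfc (fun x => √(x ^ 2 + c)) a
      = cfc (fun x => √(x ^ 2 + c) * √(x ^ 2 + c)) a := (cfc_mul ..).symm
    _ = cfc (fun x => x ^ 2 + c) a := cfc_congr fun x _ => Real.mul_self_sqrt (by positivity)
    _ = a ^ 2 + c • 1 := by
      rw [cfc_add_const .., cfc_pow_id .., Algebra.algebraMap_eq_smul_one]

lemma cfc_positiveRoot (hμ : 0 < μ) (ha : IsSelfAdjoint a) :
    cfc (positiveRoot μ) a = (2 * μ)⁻¹ • (a + CFC.sqrt (a ^ 2 + (4 * μ) • 1)) := by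
  calc cfc (positiveRoot μ) a = cfc (fun x => (2 * μ)⁻¹ • (x + √(x ^ 2 + 4 * μ))) a :=
        cfc_congr fun x _ => by rw [positiveRoot, smul_eq_mul, inv_mul_eq_div]
    _ = (2 * μ)⁻¹ • (a + CFC.sqrt (a ^ 2 + (4 * μ) • 1)) := by
        rw [cfc_smul .., cfc_add .., cfc_id' .., CFC.sqrt_sq_add_smul_one ha (by positivity)]

end CFC

/-- The matrix `Θ = (K + √(K ^ 2 + 4μ I)) / (2μ)` is symmetric positive
definite and solves the matrix quadratic equation `-Θ⁻¹ + μ Θ = K`.  The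
hypothesis `hP` is automatically satisfied since `K` is symmetric and `μ > 0`. -/
theorem theta_update_solves_quadratic (p : ℕ) (K : Matrix (Fin p) (Fin p) ℝ)
    (hK : K.IsHermitian) (μ : ℝ) (hμ : 0 < μ)
    (hP : (K ^ 2 + (4 * μ) • (1 : Matrix (Fin p) (Fin p) ℝ)).PosSemidef) :
    ((2 * μ)⁻¹ • (K + hP.sqrt)).PosDef ∧
      -((2 * μ)⁻¹ • (K + hP.sqrt))⁻¹ + μ • ((2 * μ)⁻¹ • (K + hP.sqrt)) = K := by
  open scoped MatrixOrder in
  have hΘ : (2 * μ)⁻¹ • (K + hP.sqrt) = cfc (positiveRoot μ) K := by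
    rw [hP.sqrt_eq_cfc_sqrt, cfc_positiveRoot hμ hK.isSelfAdjoint]
  rw [hΘ, Matrix.nonsing_inv_eq_ringInverse]
  exact ⟨Matrix.isStrictlyPositive_iff_posDef.mp
      (isStrictlyPositive_cfc_positiveRoot hμ hK.isSelfAdjoint),
    neg_ringInverse_cfc_positiveRoot_add_smul hμ hK.isSelfAdjoint⟩
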